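/- For s ≥ 3, if G is a bipartite graph containing no induced subgraph isomorphic to sP_1+P_3 (the disjoint union of s isolated vertices and a path on three vertices), then ivc(G) ≤ vc(G) + s − 2. -/

import Mathlib

/-!
Fix a bipartition `X, Xᶜ` of `G` and a minimum vertex cover `C`. Trading `C \ X` for its
neighbours outside `C` gives an independent vertex cover inside `X`, and symmetrically with `X`
and `Xᶜ` exchanged. If every vertex of `C \ X` has at most one neighbour outside `C`, the first
trade does not increase the size. Otherwise some `b ∈ C \ X` has two neighbours `d₁, d₂ ∉ C`, and
`d₁ b d₂` is an induced `P₃`. The neighbours of `C ∩ X` outside `C` form an independent set with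
no edge to this `P₃`, so by `sP₁ + P₃`-freeness there are fewer than `s` of them, and there are
none unless `C ∩ X ≠ ∅`; hence the second trade costs at most `s - 2`.
-/

open SimpleGraph

/-- `S` is an independent set of `G`. -/
def IsIS {V : Type*} (G : SimpleGraph V) (S : Set V) : Prop :=
  S.Pairwise fun u v => ¬ G.Adj u v

/-- `G` contains no induced subgraph isomorphic to `H`. -/
def HFree {W V : Type*} (H : SimpleGraph W) (G : SimpleGraph V) : Prop :=
  IsEmpty (H ↪g G)

/-- `G` is bipartite: the vertex set splits into two independent sets. -/
def IsBip {V : Type*} (G : SimpleGraph V) : Prop :=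
  ∃ X : Set V, IsIS G X ∧ IsIS G Xᶜ

/-- `S` is a vertex cover of `G`. -/
def IsVC {V : Type*} (G : SimpleGraph V) (S : Finset V) : Prop :=
  ∀ ⦃u v⦄, G.Adj u v → u ∈ S ∨ v ∈ S

/-- minimum size of a vertex cover. -/
noncomputable def vc {V : Type*} (G : SimpleGraph V) : ℕ :=
  sInf {n | ∃ S : Finset V, IsVC G S ∧ S.card = n}

/-- minimum size of an independent vertex cover. -/
noncomputable def ivc {V : Type*} (G : SimpleGraph V) : ℕ :=
  sInf {n | ∃ S : Finset V, IsVC G S ∧ IsIS G ↑S ∧ S.card = n}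

/-- `sP_1 + P_3`: `s` isolated vertices plus a path on three vertices. -/
def sP1P3 (s : ℕ) : SimpleGraph (Fin s ⊕ Fin 3) :=
  SimpleGraph.fromRel fun u v =>
    (u = Sum.inr 0 ∧ v = Sum.inr 1) ∨ (u = Sum.inr 1 ∧ v = Sum.inr 2)

open Finset

theorem sP1P3_eq_sum (s : ℕ) : sP1P3 s = (⊥ : SimpleGraph (Fin s)) ⊕g pathGraph 3 := by
  ext (i | i) (j | j) <;> simp [sP1P3, pathGraph_adj]
  fin_cases i <;> fin_cases j <;> simp

namespace SimpleGraph

variable {U V W : Type*} {G : SimpleGraph V}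

def Embedding.sumElim {G₁ : SimpleGraph U} {G₂ : SimpleGraph W} (φ : G₁ ↪g G) (ψ : G₂ ↪g G)
    (hne : ∀ a b, φ a ≠ ψ b) (hadj : ∀ a b, ¬ G.Adj (φ a) (ψ b)) : G₁ ⊕g G₂ ↪g G where
  toFun := Sum.elim φ ψ
  inj' := by
    rintro (a | b) (a' | b') h
    · exact congrArg Sum.inl (φ.injective h)
    · exact (hne a b' h).elim
    · exact (hne a' b h.symm).elim
    · exact congrArg Sum.inr (ψ.injective h)
  map_rel_iff' {x y} := by
    show G.Adj (Sum.elim φ ψ x) (Sum.elim φ ψ y) ↔ _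
    rcases x with a | b <;> rcases y with a' | b'
    · simp
    · simpa using hadj a b'
    · simpa using fun h => hadj a' b (G.adj_symm h)
    · simp

def Embedding.pathGraphThree {u v w : V} (huv : G.Adj u v) (hvw : G.Adj v w) (huw : ¬ G.Adj u w)
    (hne : u ≠ w) : pathGraph 3 ↪g G where
  toFun := ![u, v, w]
  inj' := by
    intro i j h
    fin_cases i <;> fin_cases j <;>
      simp_all [huv.ne, hvw.ne, huv.ne.symm, hvw.ne.symm, hne.symm]
  map_rel_iff' {i j} := by
    show G.Adj (![u, v, w] i) (![u, v, w] j) ↔ _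
    fin_cases i <;> fin_cases j <;>
      simp [pathGraph_adj, huv, hvw, huw, huv.symm, hvw.symm, G.adj_comm w u]

end SimpleGraph

section Cover

variable {V : Type*} {G : SimpleGraph V}

theorem IsIS.not_adj {S : Set V} (hS : IsIS G S) {u v : V} (hu : u ∈ S) (hv : v ∈ S) :
    ¬ G.Adj u v :=
  fun h => hS hu hv h.ne h

theorem IsVC.not_adj {C : Finset V} (hC : IsVC G C) {u v : V} (hu : u ∉ C) (hv : v ∉ C) :
    ¬ G.Adj u v :=
  fun h => (hC h).elim hu hv

theorem HFree.card_lt_of_isIS_of_not_adj {s : ℕ} (hfree : HFree (sP1P3 s) G) (φ : pathGraph 3 ↪g G)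
    {P : Finset V} (hP : IsIS G P) (hPφ : ∀ p ∈ P, ∀ k, ¬ G.Adj p (φ k)) :
    P.card < s := by
  by_contra! hs
  obtain ⟨g⟩ : Nonempty (Fin s ↪ P) := Function.Embedding.nonempty_of_card_le (by simpa using hs)
  let ι : (⊥ : SimpleGraph (Fin s)) ↪g G :=
    ⟨g.trans (Function.Embedding.subtype _), iff_of_false (hP.not_adj (g _).2 (g _).2) id⟩
  have hιφ : ∀ i k, ι i ≠ φ k := by
    intro i k h
    have hk : (pathGraph 3).Adj k (if k = 1 then 0 else 1) := by
      fin_cases k <;> simp [pathGraph_adj]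
    exact hPφ _ (g i).2 _ (h ▸ φ.map_adj_iff.2 hk)
  exact hfree.false (sP1P3_eq_sum s ▸ ι.sumElim φ hιφ fun i k => hPφ _ (g i).2 k)

theorem ivc_le_card {S : Finset V} (hS : IsVC G S) (hI : IsIS G S) : ivc G ≤ S.card :=
  Nat.sInf_le ⟨S, hS, hI, rfl⟩

theorem exists_isVC_card_eq_vc [Finite V] (G : SimpleGraph V) :
    ∃ C : Finset V, IsVC G C ∧ C.card = vc G := by
  have := Fintype.ofFinite V
  have hne : {n | ∃ S : Finset V, IsVC G S ∧ S.card = n}.Nonempty :=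
    ⟨_, Finset.univ, fun u _ _ => .inl (Finset.mem_univ u), rfl⟩
  exact Nat.sInf_mem hne

variable [Fintype V] {C : Finset V} {X : Set V}

open Classical in
noncomputable def outerNbrs (G : SimpleGraph V) (C : Finset V) (X : Set V) : Finset V :=
  {d | d ∉ C ∧ ∃ b ∈ C, b ∉ X ∧ G.Adj d b}

theorem mem_outerNbrs {d : V} : d ∈ outerNbrs G C X ↔ d ∉ C ∧ ∃ b ∈ C, b ∉ X ∧ G.Adj d b := by
  simp [outerNbrs]

theorem outerNbrs_subset (hXc : IsIS G Xᶜ) : ↑(outerNbrs G C X) ⊆ X := by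
  intro d hd
  obtain ⟨-, b, -, hbX, hdb⟩ := mem_outerNbrs.1 hd
  by_contra hdX
  exact hXc.not_adj hdX hbX hdb

theorem IsVC.filter_union_outerNbrs [DecidableEq V] [DecidablePred (· ∈ X)] (hXc : IsIS G Xᶜ)
    (hC : IsVC G C) : IsVC G ({v ∈ C | v ∈ X} ∪ outerNbrs G C X) := by
  set S := {v ∈ C | v ∈ X} ∪ outerNbrs G C X
  have key : ∀ u v, G.Adj u v → u ∈ X → u ∈ S ∨ v ∈ S := by
    intro u v huv huX
    by_cases hu : u ∈ C
    · exact .inl (mem_union_left _ (mem_filter.2 ⟨hu, huX⟩))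
    have hv : v ∈ C := (hC huv).resolve_left hu
    by_cases hvX : v ∈ X
    · exact .inr (mem_union_left _ (mem_filter.2 ⟨hv, hvX⟩))
    · exact .inl (mem_union_right _ (mem_outerNbrs.2 ⟨hu, v, hv, hvX, huv⟩))
  intro u v huv
  by_cases huX : u ∈ X
  · exact key u v huv huX
  · have hvX : v ∈ X := by_contra fun hvX => hXc.not_adj huX hvX huv
    exact (key v u huv.symm hvX).symm

theorem ivc_le_card_filter_add_card_outerNbrs [DecidableEq V] [DecidablePred (· ∈ X)]
    (hX : IsIS G X) (hXc : IsIS G Xᶜ) (hC : IsVC G C) :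
    ivc G ≤ #{v ∈ C | v ∈ X} + #(outerNbrs G C X) := by
  have hsub : ↑({v ∈ C | v ∈ X} ∪ outerNbrs G C X) ⊆ X := by
    rw [coe_union]
    exact Set.union_subset (fun v hv => (mem_filter.1 hv).2) (outerNbrs_subset hXc)
  exact (ivc_le_card (hC.filter_union_outerNbrs hXc) (hX.mono hsub)).trans (card_union_le _ _)

theorem card_outerNbrs_le [DecidablePred (· ∈ X)]
    (h : ∀ b ∈ C, b ∉ X → ({d ∈ outerNbrs G C X | G.Adj d b} : Set V).Subsingleton) :
    #(outerNbrs G C X) ≤ #{v ∈ C | v ∉ X} := by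
  refine card_le_card_of_forall_subsingleton G.Adj (fun d hd => ?_) fun b hb => ?_
  · obtain ⟨-, b, hb, hbX, hdb⟩ := mem_outerNbrs.1 hd
    exact ⟨b, mem_filter.2 ⟨hb, hbX⟩, hdb⟩
  · exact h b (mem_filter.1 hb).1 (mem_filter.1 hb).2

theorem card_outerNbrs_compl_lt {s : ℕ} (hfree : HFree (sP1P3 s) G) (hX : IsIS G X)
    (hXc : IsIS G Xᶜ) (hC : IsVC G C) {b d₁ d₂ : V} (hbX : b ∉ X) (hd₁ : d₁ ∉ C) (hd₂ : d₂ ∉ C)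
    (h₁ : G.Adj d₁ b) (h₂ : G.Adj b d₂) (hne : d₁ ≠ d₂) : #(outerNbrs G C Xᶜ) < s := by
  have hd₁X : d₁ ∈ X := by_contra fun h => hXc.not_adj h hbX h₁
  have hd₂X : d₂ ∈ X := by_contra fun h => hXc.not_adj hbX h h₂
  have hE : ↑(outerNbrs G C Xᶜ) ⊆ Xᶜ := outerNbrs_subset (by rwa [compl_compl])
  refine hfree.card_lt_of_isIS_of_not_adj (Embedding.pathGraphThree h₁ h₂ (hX.not_adj hd₁X hd₂X) hne)
    (hXc.mono hE) fun e he k => ?_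
  have heC : e ∉ C := (mem_outerNbrs.1 he).1
  fin_cases k
  · exact hC.not_adj heC hd₁
  · exact hXc.not_adj (hE he) hbX
  · exact hC.not_adj heC hd₂

end Cover

theorem stmt_8_general {V : Type*} [Fintype V] (G : SimpleGraph V) (s : ℕ)
    (hbip : IsBip G) (hfree : HFree (sP1P3 s) G) :
    ivc G ≤ vc G + (s - 2) := by
  classical
  obtain ⟨X, hX, hXc⟩ := hbip
  obtain ⟨C, hC, hCcard⟩ := exists_isVC_card_eq_vc G
  have hsplit := card_filter_add_card_filter_not (s := C) (· ∈ X)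
  by_cases hD : ∀ b ∈ C, b ∉ X → ({d ∈ outerNbrs G C X | G.Adj d b} : Set V).Subsingleton
  · have hivc := ivc_le_card_filter_add_card_outerNbrs hX hXc hC
    have hcard := card_outerNbrs_le hD
    omega
  · push Not at hD
    obtain ⟨b, -, hbX, d₁, ⟨hd₁, h₁⟩, d₂, ⟨hd₂, h₂⟩, hne⟩ := hD
    have hivc := ivc_le_card_filter_add_card_outerNbrs hXc (by rwa [compl_compl]) hC
    have hE := card_outerNbrs_compl_lt hfree hX hXc hC hbX (mem_outerNbrs.1 hd₁).1
      (mem_outerNbrs.1 hd₂).1 h₁ h₂.symm hne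
    have hA : #(outerNbrs G C Xᶜ) = 0 ∨ 0 < #{v ∈ C | v ∈ X} := by
      rcases (outerNbrs G C Xᶜ).eq_empty_or_nonempty with h | ⟨e, he⟩
      · exact .inl (card_eq_zero.2 h)
      · obtain ⟨-, a, ha, haX, -⟩ := mem_outerNbrs.1 he
        exact .inr (card_pos.2 ⟨a, mem_filter.2 ⟨ha, not_not.1 haX⟩⟩)
    simp only [Set.mem_compl_iff] at hivc
    omega

theorem stmt_8 {V : Type*} [Fintype V] (G : SimpleGraph V) (s : ℕ) (hs : 3 ≤ s)
    (hbip : IsBip G) (hfree : HFree (sP1P3 s) G) :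
    ivc G ≤ vc G + (s - 2) :=
  stmt_8_general G s hbip hfree
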